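/- arXiv:2104.06596 — 5 statements merged into one kernel-verified Lean document; each statement's English description precedes it below -/
import Mathlib

section
/- The second order attitude kinematics f((R,Ω^×),(π^×,θ^×)) = (R(Ω^× + π^×), θ^×) are equivariant: for any (Q,q) ∈ SE(3), pushing forward f(x,v) by the differential of φ_{(Q,q)} equals f(φ((Q,q),x), ψ((Q,q),v)). Concretely, with x = (R,Ω^×) and v = (π^×,θ^×): (R(π+Ω)^× Q, (Qᵀθ)^×) = f((RQ, (Qᵀ(Ω+q))^×), ((Qᵀ(π−q))^×, (Qᵀθ)^×)). -/
open Matrix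

noncomputable section

abbrev Mat3 := Matrix (Fin 3) (Fin 3) ℝ
abbrev Vec3 := Fin 3 → ℝ

/-- `Q` is a rotation matrix: orthogonal with determinant 1. -/
def IsSO3 (Q : Mat3) : Prop := Qᵀ * Q = 1 ∧ Q.det = 1

/-- skew-symmetric matrix `v^×` of a vector. -/
def hat (v : Vec3) : Mat3 := !![0, -v 2, v 1; v 2, 0, -v 0; -v 1, v 0, 0]

/-- inverse of `hat` on skew-symmetric matrices. -/
def vee (W : Mat3) : Vec3 := ![W 2 1, W 0 2, W 1 0]

/-- cross product on ℝ³. -/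
def cross (u v : Vec3) : Vec3 :=
  ![u 1 * v 2 - u 2 * v 1, u 2 * v 0 - u 0 * v 2, u 0 * v 1 - u 1 * v 0]

/-- semidirect product on SE(3): (A,a)·(B,b) = (AB, a + Ab). -/
def semul (X Y : Mat3 × Vec3) : Mat3 × Vec3 := (X.1 * Y.1, X.2 + X.1 *ᵥ Y.2)

/-- the second order attitude kinematics f((R,W),(P,T)) = (R(W+P), T). -/
def fKin (x v : Mat3 × Mat3) : Mat3 × Mat3 := (x.1 * (x.2 + v.1), v.2)

lemma hat_add (u w : Vec3) : hat u + hat w = hat (u + w) := by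
  simp [hat]
  exact ⟨by ring, by ring, by ring⟩

lemma hat_conj (Q : Mat3) (v : Vec3) (hQ : IsSO3 Q) :
    Q * hat (Qᵀ *ᵥ v) = hat v * Q := by
  obtain ⟨ho, hd⟩ := hQ
  have hadj : Q.adjugate = Qᵀ := by
    have h1 : Q * Q.adjugate = 1 := by rw [Matrix.mul_adjugate, hd, one_smul]
    calc Q.adjugate = Qᵀ * Q * Q.adjugate := by rw [ho, Matrix.one_mul]
    _ = Qᵀ * (Q * Q.adjugate) := by rw [Matrix.mul_assoc]
    _ = Qᵀ := by rw [h1, Matrix.mul_one]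
  rw [Matrix.adjugate_fin_three] at hadj
  have c00 : Q 1 1 * Q 2 2 - Q 1 2 * Q 2 1 = Q 0 0 := by
    simpa using congrFun (congrFun hadj 0) 0
  have c01 : -(Q 0 1 * Q 2 2) + Q 0 2 * Q 2 1 = Q 1 0 := by
    simpa using congrFun (congrFun hadj 0) 1
  have c02 : Q 0 1 * Q 1 2 - Q 0 2 * Q 1 1 = Q 2 0 := by
    simpa using congrFun (congrFun hadj 0) 2
  have c10 : -(Q 1 0 * Q 2 2) + Q 1 2 * Q 2 0 = Q 0 1 := by
    simpa using congrFun (congrFun hadj 1) 0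
  have c11 : Q 0 0 * Q 2 2 - Q 0 2 * Q 2 0 = Q 1 1 := by
    simpa using congrFun (congrFun hadj 1) 1
  have c12 : -(Q 0 0 * Q 1 2) + Q 0 2 * Q 1 0 = Q 2 1 := by
    simpa using congrFun (congrFun hadj 1) 2
  have c20 : Q 1 0 * Q 2 1 - Q 1 1 * Q 2 0 = Q 0 2 := by
    simpa using congrFun (congrFun hadj 2) 0
  have c21 : -(Q 0 0 * Q 2 1) + Q 0 1 * Q 2 0 = Q 1 2 := by
    simpa using congrFun (congrFun hadj 2) 1
  have c22 : Q 0 0 * Q 1 1 - Q 0 1 * Q 1 0 = Q 2 2 := by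
    simpa using congrFun (congrFun hadj 2) 2
  ext i j
  fin_cases i <;> fin_cases j <;>
    simp [hat, Matrix.mul_apply, Matrix.mulVec, dotProduct, Fin.sum_univ_three,
      Matrix.transpose_apply]
  · linear_combination v 1 * c02 - v 2 * c01
  · linear_combination v 1 * c12 - v 2 * c11
  · linear_combination v 1 * c22 - v 2 * c21
  · linear_combination -v 0 * c02 + v 2 * c00
  · linear_combination -v 0 * c12 + v 2 * c10
  · linear_combination -v 0 * c22 + v 2 * c20
  · linear_combination v 0 * c01 - v 1 * c00
  · linear_combination v 0 * c11 - v 1 * c10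
  · linear_combination v 0 * c21 - v 1 * c20

/-- equivariance of the second order attitude kinematics. -/
theorem kinematics_equivariant (Q R : Mat3) (q Ω π θ : Vec3)
    (hQ : IsSO3 Q) (hR : IsSO3 R) :
    ((R * hat (π + Ω) * Q, hat (Qᵀ *ᵥ θ)) : Mat3 × Mat3)
      = fKin (R * Q, hat (Qᵀ *ᵥ (Ω + q)))
             (hat (Qᵀ *ᵥ (π - q)), hat (Qᵀ *ᵥ θ)) := by
  unfold fKin
  refine Prod.ext ?_ rfl
  simp only
  rw [hat_add, ← Matrix.mulVec_add]
  have hv : Ω + q + (π - q) = π + Ω := by ext i; simp; ring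
  rw [hv, Matrix.mul_assoc R Q, hat_conj Q _ hQ, ← Matrix.mul_assoc]
end
end

section
/- Given accelerometer positions r₀ = 0, r₁ = l e₁, r₂ = l e₂, r₃ = l e₃ and measurements a_i = a₀ + θ × r_i + Ω × (Ω × r_i), the angular acceleration θ is exactly recovered by the formula θ = (1/(2l)) [ (a₂ − a₀)_z − (a₃ − a₀)_y ; (a₃ − a₀)_x − (a₁ − a₀)_z ; (a₁ − a₀)_y − (a₂ − a₀)_x ]. -/
open Matrix

noncomputable section

/-- angular acceleration recovery from four accelerometers. -/
theorem angular_acceleration_recovery (l : ℝ) (hl : 0 < l)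
    (a₀ θ Ω : Vec3) (r₁ r₂ r₃ a₁ a₂ a₃ : Vec3)
    (hr1 : r₁ = l • ![1, 0, 0]) (hr2 : r₂ = l • ![0, 1, 0]) (hr3 : r₃ = l • ![0, 0, 1])
    (ha1 : a₁ = a₀ + cross θ r₁ + cross Ω (cross Ω r₁))
    (ha2 : a₂ = a₀ + cross θ r₂ + cross Ω (cross Ω r₂))
    (ha3 : a₃ = a₀ + cross θ r₃ + cross Ω (cross Ω r₃)) :
    θ = (1 / (2 * l)) •
      ![(a₂ - a₀) 2 - (a₃ - a₀) 1,
        (a₃ - a₀) 0 - (a₁ - a₀) 2,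
        (a₁ - a₀) 1 - (a₂ - a₀) 0] := by
  subst hr1 hr2 hr3 ha1 ha2 ha3
  funext i
  fin_cases i <;>
    simp [cross, Pi.smul_apply, Matrix.smul_cons, Matrix.cons_val_zero, Matrix.cons_val_one,
      Matrix.head_cons, smul_eq_mul, Matrix.vecHead, Matrix.vecTail, Function.comp] <;>
    field_simp <;> ring
end
end

section
/- For unit vectors a, m, â, m̂ ∈ ℝ³ evolving as ȧ = −Ω^× a, ṁ = −Ω^× m, â̇ = −(Ω̂ + k₁α)^× â, m̂̇ = −(Ω̂ + k₁α)^× m̂ with α = m × m̂ + a × â and Ω̃ = Ω − Ω̂ satisfying Ω̃̇ = −k₂α, the function L = (1 − âᵀa) + (1 − m̂ᵀm) + (1/(2k₂))|Ω̃|² satisfies L̇ = −k₁|α|². -/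
open Matrix

noncomputable section

lemma dot_deriv (u v : ℝ → Vec3) (u' v' : Vec3) (t : ℝ)
    (hu : ∀ i, HasDerivAt (fun s => u s i) (u' i) t)
    (hv : ∀ i, HasDerivAt (fun s => v s i) (v' i) t) :
    HasDerivAt (fun s => u s ⬝ᵥ v s) (u' ⬝ᵥ v t + u t ⬝ᵥ v') t := by
  simp only [dotProduct]
  rw [← Finset.sum_add_distrib]
  exact HasDerivAt.fun_sum (fun i _ => (hu i).mul (hv i))

/-- the Lyapunov function satisfies L̇ = −k₁|α|². -/
theorem lyapunov_derivative (k₁ k₂ : ℝ) (hk₁ : 0 < k₁) (hk₂ : 0 < k₂)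
    (a m ah mh Ω Ωh : ℝ → Vec3)
    (ha1 : ∀ t, a t ⬝ᵥ a t = 1) (hm1 : ∀ t, m t ⬝ᵥ m t = 1)
    (hah1 : ∀ t, ah t ⬝ᵥ ah t = 1) (hmh1 : ∀ t, mh t ⬝ᵥ mh t = 1)
    (ha : ∀ t i, HasDerivAt (fun s => a s i) ((-(hat (Ω t) *ᵥ a t)) i) t)
    (hm : ∀ t i, HasDerivAt (fun s => m s i) ((-(hat (Ω t) *ᵥ m t)) i) t)
    (hah : ∀ t i, HasDerivAt (fun s => ah s i)
      ((-(hat (Ωh t + k₁ • (cross (m t) (mh t) + cross (a t) (ah t))) *ᵥ ah t)) i) t)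
    (hmh : ∀ t i, HasDerivAt (fun s => mh s i)
      ((-(hat (Ωh t + k₁ • (cross (m t) (mh t) + cross (a t) (ah t))) *ᵥ mh t)) i) t)
    (hΩt : ∀ t i, HasDerivAt (fun s => Ω s i - Ωh s i)
      ((-k₂ • (cross (m t) (mh t) + cross (a t) (ah t))) i) t) :
    ∀ t, HasDerivAt
      (fun s => (1 - ah s ⬝ᵥ a s) + (1 - mh s ⬝ᵥ m s)
        + (1 / (2 * k₂)) * ((Ω s - Ωh s) ⬝ᵥ (Ω s - Ωh s)))
      (-k₁ * ((cross (m t) (mh t) + cross (a t) (ah t)) ⬝ᵥ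
              (cross (m t) (mh t) + cross (a t) (ah t)))) t := by
  intro t
  have hda := dot_deriv ah a _ _ t (hah t) (ha t)
  have hdm := dot_deriv mh m _ _ t (hmh t) (hm t)
  have hdΩ := dot_deriv (fun s => Ω s - Ωh s) (fun s => Ω s - Ωh s) _ _ t
    (hΩt t) (hΩt t)
  have H := (((hda.const_sub 1).add (hdm.const_sub 1)).add
    (hdΩ.const_mul (1 / (2 * k₂))))
  refine H.congr_deriv ?_
  have hk : k₂ ≠ 0 := ne_of_gt hk₂
  simp only [hat, cross, dotProduct, mulVec, Fin.sum_univ_three, Pi.add_apply,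
    Pi.sub_apply, Pi.neg_apply, Pi.smul_apply, smul_eq_mul,
    Matrix.cons_val', Matrix.cons_val_zero, Matrix.cons_val_one, Matrix.head_cons,
    Matrix.empty_val', Matrix.cons_val_fin_one, Matrix.head_fin_const,
    Matrix.cons_val_two, Matrix.tail_cons, Matrix.of_apply]
  field_simp
  ring
end
end

section
/- For any unit vectors å, m̊ ∈ ℝ³ and R̃ ∈ SO(3), with M = m̊m̊ᵀ + åå ᵀ, the identity |m̊ × (R̃ᵀm̊) + å × (R̃ᵀå)|² = ½ ‖R̃ᵀM − MR̃‖²_F holds, where ‖·‖_F is the Frobenius norm. -/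
open Matrix

noncomputable section

set_option maxHeartbeats 2000000 in
/-- |m̊ × R̃ᵀm̊ + å × R̃ᵀå|² = ½‖R̃ᵀM − MR̃‖²_F. -/
theorem innovation_frobenius (aring mring : Vec3) (Rt : Mat3)
    (ha : aring ⬝ᵥ aring = 1) (hm : mring ⬝ᵥ mring = 1) (hR : IsSO3 Rt) :
    (cross mring (Rtᵀ *ᵥ mring) + cross aring (Rtᵀ *ᵥ aring)) ⬝ᵥ
      (cross mring (Rtᵀ *ᵥ mring) + cross aring (Rtᵀ *ᵥ aring))
    = (1 / 2) * Matrix.trace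
        ((Rtᵀ * (vecMulVec mring mring + vecMulVec aring aring)
            - (vecMulVec mring mring + vecMulVec aring aring) * Rt)ᵀ *
         (Rtᵀ * (vecMulVec mring mring + vecMulVec aring aring)
            - (vecMulVec mring mring + vecMulVec aring aring) * Rt)) := by
  simp only [cross, dotProduct, Pi.add_apply, Matrix.mulVec, Matrix.trace, Matrix.diag,
    Matrix.mul_apply, Matrix.sub_apply, Matrix.add_apply, Matrix.transpose_apply,
    Matrix.vecMulVec_apply, Fin.sum_univ_succ, Fin.sum_univ_zero,
    Matrix.cons_val_zero, Matrix.cons_val_one, Matrix.head_cons, Matrix.cons_val_two,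
    Matrix.tail_cons, Fin.succ_zero_eq_one, Fin.succ_one_eq_two]
  ring
end
end

section
/- If (Q(t), q(t)) satisfies the lifted kinematics Q̇ = (Ω₀+q)^× Q + (Qπ)^× Q, q̇ = (Qπ)^×(Ω₀+q) + Qθ with π ≡ 0, then R = R₀Q and Ω = Qᵀ(Ω₀+q) satisfy the second order attitude kinematics Ṙ = RΩ^× and Ω̇ = θ. -/
open Matrix

noncomputable section

lemma adj_eq (Q : Mat3) (h : IsSO3 Q) : Q.adjugate = Qᵀ := by
  have h1 : Q * Qᵀ = 1 := mul_eq_one_comm.mp h.1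
  calc Q.adjugate = Q.adjugate * (Q * Qᵀ) := by rw [h1, mul_one]
    _ = (Q.adjugate * Q) * Qᵀ := by rw [mul_assoc]
    _ = Qᵀ := by rw [Matrix.adjugate_mul, h.2, one_smul, Matrix.one_mul]

lemma key (Q : Mat3) (h : IsSO3 Q) (w : Vec3) : Q * hat (Qᵀ *ᵥ w) = hat w * Q := by
  have hadj := adj_eq Q h
  rw [Matrix.adjugate_fin_three] at hadj
  have e00 := congrFun (congrFun hadj 0) 0
  have e01 := congrFun (congrFun hadj 0) 1
  have e02 := congrFun (congrFun hadj 0) 2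
  have e10 := congrFun (congrFun hadj 1) 0
  have e11 := congrFun (congrFun hadj 1) 1
  have e12 := congrFun (congrFun hadj 1) 2
  have e20 := congrFun (congrFun hadj 2) 0
  have e21 := congrFun (congrFun hadj 2) 1
  have e22 := congrFun (congrFun hadj 2) 2
  simp [Matrix.transpose_apply] at e00 e01 e02 e10 e11 e12 e20 e21 e22
  ext i j
  simp only [Matrix.mul_apply, hat, Matrix.mulVec, dotProduct, Fin.sum_univ_three,
    Matrix.transpose_apply]
  fin_cases i <;> fin_cases j <;> simp
  · linear_combination w 1 * e02 - w 2 * e01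
  · linear_combination w 1 * e12 - w 2 * e11
  · linear_combination w 1 * e22 - w 2 * e21
  · linear_combination w 2 * e00 - w 0 * e02
  · linear_combination w 2 * e10 - w 0 * e12
  · linear_combination w 2 * e20 - w 0 * e22
  · linear_combination w 0 * e01 - w 1 * e00
  · linear_combination w 0 * e11 - w 1 * e10
  · linear_combination w 0 * e21 - w 1 * e20

/-- the lifted kinematics with π ≡ 0 project to the second order
attitude kinematics Ṙ = RΩ^×, Ω̇ = θ. -/
theorem lifted_projects (R₀ : Mat3) (Ω₀ : Vec3) (hR₀ : IsSO3 R₀)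
    (Q : ℝ → Mat3) (q θ : ℝ → Vec3)
    (hSO : ∀ t, IsSO3 (Q t))
    (hQ : ∀ t i j, HasDerivAt (fun s => Q s i j) ((hat (Ω₀ + q t) * Q t) i j) t)
    (hq : ∀ t i, HasDerivAt (fun s => q s i) ((Q t *ᵥ θ t) i) t) :
    (∀ t i j, HasDerivAt (fun s => (R₀ * Q s) i j)
      ((R₀ * Q t * hat ((Q t)ᵀ *ᵥ (Ω₀ + q t))) i j) t) ∧
    (∀ t i, HasDerivAt (fun s => ((Q s)ᵀ *ᵥ (Ω₀ + q s)) i) (θ t i) t) := by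
  constructor
  · intro t i j
    have hsum : HasDerivAt (fun s => ∑ k, R₀ i k * Q s k j)
        (∑ k, R₀ i k * ((hat (Ω₀ + q t) * Q t) k j)) t := by
      apply HasDerivAt.fun_sum
      intro k _
      exact (hQ t k j).const_mul (R₀ i k)
    have heq : (R₀ * Q t * hat ((Q t)ᵀ *ᵥ (Ω₀ + q t))) i j
        = ∑ k, R₀ i k * ((hat (Ω₀ + q t) * Q t) k j) := by
      rw [mul_assoc, key (Q t) (hSO t)]
      simp [Matrix.mul_apply]
    rw [heq]
    apply hsum.congr_of_eventuallyEq
    filter_upwards with s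
    simp [Matrix.mul_apply]
  · intro t i
    set w := Ω₀ + q t with hw
    have hsum : HasDerivAt (fun s => ∑ k, Q s k i * (Ω₀ k + q s k))
        (∑ k, ((hat w * Q t) k i * (Ω₀ k + q t k) + Q t k i * ((Q t *ᵥ θ t) k))) t := by
      apply HasDerivAt.fun_sum
      intro k _
      have h := (hQ t k i).mul ((hasDerivAt_const t (Ω₀ k)).add (hq t k))
      rwa [zero_add] at h
    have heq : (∑ k, ((hat w * Q t) k i * (Ω₀ k + q t k) + Q t k i * ((Q t *ᵥ θ t) k)))
        = θ t i := by
      have ho := (hSO t).1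
      have o00 := congrFun (congrFun ho 0) 0
      have o01 := congrFun (congrFun ho 0) 1
      have o02 := congrFun (congrFun ho 0) 2
      have o10 := congrFun (congrFun ho 1) 0
      have o11 := congrFun (congrFun ho 1) 1
      have o12 := congrFun (congrFun ho 1) 2
      have o20 := congrFun (congrFun ho 2) 0
      have o21 := congrFun (congrFun ho 2) 1
      have o22 := congrFun (congrFun ho 2) 2
      simp [Matrix.mul_apply, Matrix.one_apply, Fin.sum_univ_three,
        Matrix.transpose_apply] at o00 o01 o02 o10 o11 o12 o20 o21 o22
      simp only [Matrix.mul_apply, hat, Matrix.mulVec, dotProduct, Fin.sum_univ_three,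
        hw, Pi.add_apply]
      fin_cases i <;> simp
      · linear_combination θ t 0 * o00 + θ t 1 * o01 + θ t 2 * o02
      · linear_combination θ t 0 * o10 + θ t 1 * o11 + θ t 2 * o12
      · linear_combination θ t 0 * o20 + θ t 1 * o21 + θ t 2 * o22
    rw [← heq]
    apply hsum.congr_of_eventuallyEq
    filter_upwards with s
    simp [Matrix.mulVec, dotProduct, Matrix.transpose_apply]
end
end
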